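/- Let n ≥ 2 be an integer and a₀, a₁, …, a_n ≥ 0 be constants. Fix t ∈ [0,1) and real numbers f₁, f₂, g₁, g₂, and for τ ∈ [0,1] define the curve γ^τ : [0,2π] → ℝ² by γ^τ(θ) = ( (1−t)(θ−π) + τ f₁ + (1−τ) f₂ , τ g₁ + (1−τ) g₂ ). Then the vector field ∂_τ γ^τ = (f₁ − f₂, g₁ − g₂) is independent of θ and τ, D_s(∂_τ γ^τ) = 0 where D_s := ‖∂_θ γ^τ‖^{-1} ∂_θ, and the G-length of the homotopy satisfies ∫₀¹ ( Σ_{i=0}^{n} a_i ∫₀^{2π} ‖D_s^i (∂_τ γ^τ)(θ)‖² ‖∂_θ γ^τ(θ)‖ dθ )^{1/2} dτ = ( 2π a₀ (1−t) )^{1/2} ( (f₁ − f₂)² + (g₁ − g₂)² )^{1/2}. In particular, if f₁, f₂, g₁, g₂ are replaced by bounded functions of t, this quantity tends to 0 as t → 1⁻. -/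

import Mathlib

/-!
The homotopy is affine in both `θ` and `τ`, so `∂_θ γ^τ = (1 - t, 0)` and
`∂_τ γ^τ = (f₁ - f₂, g₁ - g₂)` are constant. All arc-length derivatives of order `≥ 1` of the
variation field therefore vanish, only the `a₀` term of the metric survives, and the integrand of
the length is the constant `√(2π a₀ (1 - t) ‖∂_τ γ^τ‖²)`. Since the speed `1 - t` of the curves
tends to `0`, so does the length, uniformly for bounded endpoints.
-/

open Real MeasureTheory Set Filter Topology

/-- The vector `(x, y)` in the Euclidean plane `ℝ²`. -/
noncomputable def vec2 (x y : ℝ) : EuclideanSpace ℝ (Fin 2) :=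
  (WithLp.equiv 2 (Fin 2 → ℝ)).symm ![x, y]

/-- The arc-length derivative `D_s = ‖∂_θ c‖⁻¹ ∂_θ` along a plane curve `c`. -/
noncomputable def Ds (c : ℝ → EuclideanSpace ℝ (Fin 2)) (h : ℝ → EuclideanSpace ℝ (Fin 2)) :
    ℝ → EuclideanSpace ℝ (Fin 2) :=
  fun θ => ‖deriv c θ‖⁻¹ • deriv h θ

/-- The affine homotopy `γ^τ(θ) = ((1−t)(θ−π) + τ f₁ + (1−τ) f₂, τ g₁ + (1−τ) g₂)`
between two shrinking straight-line curves. -/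
noncomputable def affHomotopy (t f₁ f₂ g₁ g₂ τ : ℝ) : ℝ → EuclideanSpace ℝ (Fin 2) :=
  fun θ => vec2 ((1 - t) * (θ - π) + τ * f₁ + (1 - τ) * f₂) (τ * g₁ + (1 - τ) * g₂)

/-- The variation field `∂_τ γ^τ` of the affine homotopy. -/
noncomputable def affVar (t f₁ f₂ g₁ g₂ τ : ℝ) : ℝ → EuclideanSpace ℝ (Fin 2) :=
  fun θ => deriv (fun τ' => affHomotopy t f₁ f₂ g₁ g₂ τ' θ) τ

/-- The `G`-length `∫₀¹ √(Σ_{i=0}^n a_i ∫₀^{2π} ‖D_s^i(∂_τ γ^τ)‖² ‖∂_θ γ^τ‖ dθ) dτ`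
of the affine homotopy, for the constant-coefficient Sobolev metric of order `n`. -/
noncomputable def affHomotopyLength (n : ℕ) (a : ℕ → ℝ) (t f₁ f₂ g₁ g₂ : ℝ) : ℝ :=
  ∫ τ in (0:ℝ)..1, Real.sqrt (∑ i ∈ Finset.range (n + 1),
    a i * ∫ θ in (0:ℝ)..(2 * π),
      ‖(Ds (affHomotopy t f₁ f₂ g₁ g₂ τ))^[i] (affVar t f₁ f₂ g₁ g₂ τ) θ‖ ^ 2 *
        ‖deriv (affHomotopy t f₁ f₂ g₁ g₂ τ) θ‖)

lemma vec2_add (x y x' y' : ℝ) : vec2 x y + vec2 x' y' = vec2 (x + x') (y + y') := by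
  ext i; fin_cases i <;> simp [vec2]

lemma smul_vec2 (r x y : ℝ) : r • vec2 x y = vec2 (r * x) (r * y) := by
  ext i; fin_cases i <;> simp [vec2]

lemma norm_vec2 (x y : ℝ) : ‖vec2 x y‖ = √(x ^ 2 + y ^ 2) := by
  simp [vec2, EuclideanSpace.norm_eq, Fin.sum_univ_two, sq_abs]

lemma Ds_const (c : ℝ → EuclideanSpace ℝ (Fin 2)) (v : EuclideanSpace ℝ (Fin 2)) :
    Ds c (fun _ => v) = fun _ => 0 := by
  funext θ; simp [Ds]

lemma Ds_iterate_const (c : ℝ → EuclideanSpace ℝ (Fin 2)) (v : EuclideanSpace ℝ (Fin 2))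
    {i : ℕ} (hi : i ≠ 0) : (Ds c)^[i] (fun _ => v) = fun _ => 0 := by
  obtain ⟨k, rfl⟩ := Nat.exists_eq_succ_of_ne_zero hi
  rw [Function.iterate_succ_apply, Ds_const]
  exact Function.iterate_fixed (Ds_const c 0) k

lemma affHomotopy_eq_add_smul_param (t f₁ f₂ g₁ g₂ θ : ℝ) :
    (fun τ => affHomotopy t f₁ f₂ g₁ g₂ τ θ) =
      fun τ => vec2 ((1 - t) * (θ - π) + f₂) g₂ + τ • vec2 (f₁ - f₂) (g₁ - g₂) := by
  funext τ
  simp only [affHomotopy, smul_vec2, vec2_add]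
  ring_nf

lemma affHomotopy_eq_add_smul (t f₁ f₂ g₁ g₂ τ : ℝ) :
    affHomotopy t f₁ f₂ g₁ g₂ τ =
      fun θ => affHomotopy t f₁ f₂ g₁ g₂ τ 0 + θ • vec2 (1 - t) 0 := by
  funext θ
  simp only [affHomotopy, smul_vec2, vec2_add]
  ring_nf

lemma deriv_const_add_smul {E : Type*} [NormedAddCommGroup E] [NormedSpace ℝ E] (p v : E)
    (x : ℝ) : deriv (fun s : ℝ => p + s • v) x = v := by
  simpa using (((hasDerivAt_id x).smul_const v).const_add p).deriv

lemma affVar_eq (t f₁ f₂ g₁ g₂ τ : ℝ) :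
    affVar t f₁ f₂ g₁ g₂ τ = fun _ => vec2 (f₁ - f₂) (g₁ - g₂) := by
  funext θ
  rw [affVar, affHomotopy_eq_add_smul_param, deriv_const_add_smul]

lemma deriv_affHomotopy (t f₁ f₂ g₁ g₂ τ θ : ℝ) :
    deriv (affHomotopy t f₁ f₂ g₁ g₂ τ) θ = vec2 (1 - t) 0 := by
  rw [affHomotopy_eq_add_smul, deriv_const_add_smul]

lemma norm_deriv_affHomotopy {t : ℝ} (ht : t ≤ 1) (f₁ f₂ g₁ g₂ τ θ : ℝ) :
    ‖deriv (affHomotopy t f₁ f₂ g₁ g₂ τ) θ‖ = 1 - t := by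
  rw [deriv_affHomotopy, norm_vec2, zero_pow two_ne_zero, add_zero,
    sqrt_sq (sub_nonneg.mpr ht)]

lemma sobolevEnergy_affVar (n : ℕ) (a : ℕ → ℝ) {t : ℝ} (ht : t ≤ 1) (f₁ f₂ g₁ g₂ τ : ℝ) :
    ∑ i ∈ Finset.range (n + 1), a i * ∫ θ in (0 : ℝ)..(2 * π),
        ‖(Ds (affHomotopy t f₁ f₂ g₁ g₂ τ))^[i] (affVar t f₁ f₂ g₁ g₂ τ) θ‖ ^ 2 *
          ‖deriv (affHomotopy t f₁ f₂ g₁ g₂ τ) θ‖ =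
      2 * π * a 0 * (1 - t) * ((f₁ - f₂) ^ 2 + (g₁ - g₂) ^ 2) := by
  rw [Finset.sum_eq_single_of_mem 0 (Finset.mem_range.mpr n.succ_pos)]
  · simp only [Function.iterate_zero, id, affVar_eq, norm_deriv_affHomotopy ht, norm_vec2,
      sq_sqrt (by positivity : 0 ≤ (f₁ - f₂) ^ 2 + (g₁ - g₂) ^ 2),
      intervalIntegral.integral_const, smul_eq_mul]
    ring
  · intro i _ hi
    simp [affVar_eq, Ds_iterate_const _ _ hi]

lemma affHomotopyLength_eq (n : ℕ) (a : ℕ → ℝ) (ha₀ : 0 ≤ a 0) {t : ℝ} (ht : t ≤ 1)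
    (f₁ f₂ g₁ g₂ : ℝ) :
    affHomotopyLength n a t f₁ f₂ g₁ g₂ =
      √(2 * π * a 0 * (1 - t)) * √((f₁ - f₂) ^ 2 + (g₁ - g₂) ^ 2) := by
  have hcoeff : 0 ≤ 2 * π * a 0 * (1 - t) := by
    have := sub_nonneg.mpr ht
    positivity
  simp only [affHomotopyLength, sobolevEnergy_affVar n a ht, sqrt_mul hcoeff,
    intervalIntegral.integral_const, sub_zero, one_smul]

lemma sq_sub_add_sq_sub_le {x₁ x₂ y₁ y₂ M : ℝ} (hx₁ : |x₁| ≤ M) (hx₂ : |x₂| ≤ M)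
    (hy₁ : |y₁| ≤ M) (hy₂ : |y₂| ≤ M) : (x₁ - x₂) ^ 2 + (y₁ - y₂) ^ 2 ≤ 8 * M ^ 2 := by
  have hx : |x₁ - x₂| ≤ 2 * M := (abs_sub _ _).trans (by linarith)
  have hy : |y₁ - y₂| ≤ 2 * M := (abs_sub _ _).trans (by linarith)
  nlinarith [sq_le_sq' (abs_le.mp hx).1 (abs_le.mp hx).2,
    sq_le_sq' (abs_le.mp hy).1 (abs_le.mp hy).2]

lemma tendsto_affHomotopyLength (n : ℕ) (a : ℕ → ℝ) (ha₀ : 0 ≤ a 0) (F₁ F₂ G₁ G₂ : ℝ → ℝ)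
    {M : ℝ} (hM : ∀ s, |F₁ s| ≤ M ∧ |F₂ s| ≤ M ∧ |G₁ s| ≤ M ∧ |G₂ s| ≤ M) :
    Tendsto (fun t => affHomotopyLength n a t (F₁ t) (F₂ t) (G₁ t) (G₂ t))
      (𝓝[<] 1) (𝓝 0) := by
  have hbound : Tendsto (fun t => √(2 * π * a 0 * (1 - t)) * √(8 * M ^ 2)) (𝓝[<] 1) (𝓝 0) := by
    have hcont : Continuous fun t => √(2 * π * a 0 * (1 - t)) * √(8 * M ^ 2) := by fun_prop
    simpa using (hcont.tendsto 1).mono_left nhdsWithin_le_nhds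
  refine squeeze_zero' ?_ ?_ hbound <;>
    filter_upwards [self_mem_nhdsWithin] with t (ht : t < 1) <;>
    rw [affHomotopyLength_eq n a ha₀ ht.le]
  · positivity
  · obtain ⟨h₁, h₂, h₃, h₄⟩ := hM t
    gcongr
    exact sq_sub_add_sq_sub_le h₁ h₂ h₃ h₄

theorem affine_homotopy_length_general (n : ℕ) (a : ℕ → ℝ) (ha : ∀ i, 0 ≤ a i)
    (t : ℝ) (ht1 : t < 1) (f₁ f₂ g₁ g₂ : ℝ) :
    (∀ τ θ : ℝ, affVar t f₁ f₂ g₁ g₂ τ θ = vec2 (f₁ - f₂) (g₁ - g₂)) ∧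
    (∀ τ θ : ℝ, Ds (affHomotopy t f₁ f₂ g₁ g₂ τ) (affVar t f₁ f₂ g₁ g₂ τ) θ = 0) ∧
    affHomotopyLength n a t f₁ f₂ g₁ g₂ =
      Real.sqrt (2 * π * a 0 * (1 - t)) * Real.sqrt ((f₁ - f₂) ^ 2 + (g₁ - g₂) ^ 2) ∧
    (∀ F₁ F₂ G₁ G₂ : ℝ → ℝ,
      (∃ M : ℝ, ∀ s : ℝ, |F₁ s| ≤ M ∧ |F₂ s| ≤ M ∧ |G₁ s| ≤ M ∧ |G₂ s| ≤ M) →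
      Tendsto (fun t' => affHomotopyLength n a t' (F₁ t') (F₂ t') (G₁ t') (G₂ t'))
        (nhdsWithin 1 (Iio 1)) (nhds 0)) := by
  refine ⟨fun τ θ => by rw [affVar_eq], fun τ θ => by rw [affVar_eq, Ds_const],
    affHomotopyLength_eq n a (ha 0) ht1.le f₁ f₂ g₁ g₂, ?_⟩
  rintro F₁ F₂ G₁ G₂ ⟨M, hM⟩
  exact tendsto_affHomotopyLength n a (ha 0) F₁ F₂ G₁ G₂ hM

/-- **The affine homotopy between shrinking lines has vanishing `G`-length as `t → 1⁻`.**
The variation field `∂_τ γ^τ = (f₁ − f₂, g₁ − g₂)` is constant, `D_s(∂_τ γ^τ) = 0`, the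
`G`-length of the homotopy equals `√(2π a₀ (1−t)) √((f₁−f₂)² + (g₁−g₂)²)`, and in particular
for bounded functions of `t` this quantity tends to `0` as `t → 1⁻`. -/
theorem affine_homotopy_length (n : ℕ) (hn : 2 ≤ n) (a : ℕ → ℝ) (ha : ∀ i, 0 ≤ a i)
    (t : ℝ) (ht0 : 0 ≤ t) (ht1 : t < 1) (f₁ f₂ g₁ g₂ : ℝ) :
    (∀ τ θ : ℝ, affVar t f₁ f₂ g₁ g₂ τ θ = vec2 (f₁ - f₂) (g₁ - g₂)) ∧
    (∀ τ θ : ℝ, Ds (affHomotopy t f₁ f₂ g₁ g₂ τ) (affVar t f₁ f₂ g₁ g₂ τ) θ = 0) ∧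
    affHomotopyLength n a t f₁ f₂ g₁ g₂ =
      Real.sqrt (2 * π * a 0 * (1 - t)) * Real.sqrt ((f₁ - f₂) ^ 2 + (g₁ - g₂) ^ 2) ∧
    (∀ F₁ F₂ G₁ G₂ : ℝ → ℝ,
      (∃ M : ℝ, ∀ s : ℝ, |F₁ s| ≤ M ∧ |F₂ s| ≤ M ∧ |G₁ s| ≤ M ∧ |G₂ s| ≤ M) →
      Tendsto (fun t' => affHomotopyLength n a t' (F₁ t') (F₂ t') (G₁ t') (G₂ t'))
        (nhdsWithin 1 (Iio 1)) (nhds 0)) :=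
  affine_homotopy_length_general n a ha t ht1 f₁ f₂ g₁ g₂
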